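/- The set {Q̃|_{𝒜_ℒ×𝒜_ℒ⁰} : Q̃ ∈ 𝒫} of restrictions to 𝒜_ℒ × 𝒜_ℒ⁰ of full conditional probabilities on 𝒜 extending {π, σ} coincides with the set of all full conditional probabilities π̃ on 𝒜_ℒ with π̃(B|Ω) = π(B) for every B ∈ 𝒜_ℒ; in particular this set does not depend on the strategy σ. -/

import Mathlib

open Set

open scoped Classical

variable {Ω : Type*}

/-- A field of sets on `Ω`: contains `univ`, closed under complements and finite unions. -/
def IsSetField (𝒜 : Set (Set Ω)) : Prop :=
  Set.univ ∈ 𝒜 ∧ (∀ A ∈ 𝒜, Aᶜ ∈ 𝒜) ∧ ∀ A ∈ 𝒜, ∀ B ∈ 𝒜, A ∪ B ∈ 𝒜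

/-- A finitely additive probability on the field `𝒜`. -/
def IsFAP (𝒜 : Set (Set Ω)) (P : Set Ω → ℝ) : Prop :=
  (∀ A ∈ 𝒜, 0 ≤ P A ∧ P A ≤ 1) ∧ P Set.univ = 1 ∧
    ∀ A ∈ 𝒜, ∀ B ∈ 𝒜, Disjoint A B → P (A ∪ B) = P A + P B

/-- A partition of `Ω` into nonempty pairwise disjoint pieces. -/
def IsPartition {ι : Type*} (H : ι → Set Ω) : Prop :=
  (∀ i, (H i).Nonempty) ∧ (Pairwise fun i j => Disjoint (H i) (H j)) ∧
    (⋃ i, H i) = Set.univ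

/-- A field containing every member of the partition `H` and whose members are
unions of members of the partition. -/
def IsFieldOver {ι : Type*} (H : ι → Set Ω) (𝒜L : Set (Set Ω)) : Prop :=
  IsSetField 𝒜L ∧ (∀ i, H i ∈ 𝒜L) ∧ ∀ A ∈ 𝒜L, ∃ S : Set ι, A = ⋃ i ∈ S, H i

/-- A field containing `𝒜L ∪ 𝒜E` whose members are unions of the atoms `H i ∩ E j`. -/
def IsJointField {ι κ : Type*} (H : ι → Set Ω) (E : κ → Set Ω)
    (𝒜L 𝒜E 𝒜 : Set (Set Ω)) : Prop :=
  IsSetField 𝒜 ∧ 𝒜L ⊆ 𝒜 ∧ 𝒜E ⊆ 𝒜 ∧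
    ∀ A ∈ 𝒜, ∃ S : Set (ι × κ), A = ⋃ p ∈ S, H p.1 ∩ E p.2

/-- A strategy on `𝒜 × ℒ`: each `σ (·|H i)` is a finitely additive probability on `𝒜`
equal to `1` on events implied by `H i`. -/
def IsStrategy {ι : Type*} (𝒜 : Set (Set Ω)) (H : ι → Set Ω) (σ : Set Ω → ι → ℝ) : Prop :=
  ∀ i, IsFAP 𝒜 (fun F => σ F i) ∧ ∀ F ∈ 𝒜, H i ⊆ F → σ F i = 1

/-- A full conditional probability on the field `𝒜` (conditions (C1), (C2), (C3)). -/
def IsFCP (𝒜 : Set (Set Ω)) (P : Set Ω → Set Ω → ℝ) : Prop :=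
  (∀ E ∈ 𝒜, ∀ K ∈ 𝒜, K.Nonempty → P E K = P (E ∩ K) K) ∧
  (∀ K ∈ 𝒜, K.Nonempty → IsFAP 𝒜 fun E => P E K) ∧
  ∀ E ∈ 𝒜, ∀ F ∈ 𝒜, ∀ K ∈ 𝒜, K.Nonempty → (E ∩ K).Nonempty →
    P (E ∩ F) K = P E K * P F (E ∩ K)

/-- `P` extends the prior `π` on `𝒜L` and the strategy `σ` on `𝒜 × ℒ`. -/
def ExtendsPriorStrategy {ι : Type*} (𝒜 𝒜L : Set (Set Ω)) (H : ι → Set Ω)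
    (π : Set Ω → ℝ) (σ : Set Ω → ι → ℝ) (P : Set Ω → Set Ω → ℝ) : Prop :=
  (∀ B ∈ 𝒜L, P B Set.univ = π B) ∧ ∀ F ∈ 𝒜, ∀ i, P F (H i) = σ F i

/-- The set `𝒫` of full conditional probabilities on `𝒜` extending `{π, σ}`. -/
def FCPSet {ι : Type*} (𝒜 𝒜L : Set (Set Ω)) (H : ι → Set Ω)
    (π : Set Ω → ℝ) (σ : Set Ω → ι → ℝ) : Set (Set Ω → Set Ω → ℝ) :=
  {P | IsFCP 𝒜 P ∧ ExtendsPriorStrategy 𝒜 𝒜L H π σ P}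

/-- Lower envelope of a set of conditional probabilities at `F|K`. -/
noncomputable def lowEnv (Ps : Set (Set Ω → Set Ω → ℝ)) (F K : Set Ω) : ℝ :=
  sInf ((fun P => P F K) '' Ps)

/-- Upper envelope of a set of conditional probabilities at `F|K`. -/
noncomputable def upEnv (Ps : Set (Set Ω → Set Ω → ℝ)) (F K : Set Ω) : ℝ :=
  sSup ((fun P => P F K) '' Ps)

/-- A finite partition of `Ω` contained in `𝒜L`. -/
def IsFinPart (𝒜L : Set (Set Ω)) (T : Finset (Set Ω)) : Prop :=
  (↑T : Set (Set Ω)) ⊆ 𝒜L ∧ (∀ A ∈ T, (A : Set Ω).Nonempty) ∧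
    (∀ A ∈ T, ∀ B ∈ T, A ≠ B → Disjoint A B) ∧ ⋃₀ (↑T : Set (Set Ω)) = Set.univ

/-- Lower Stieltjes integral of `X : ℒ → ℝ` with respect to `μ` on `𝒜L`. -/
noncomputable def lowerSInt {ι : Type*} (H : ι → Set Ω) (𝒜L : Set (Set Ω))
    (X : ι → ℝ) (μ : Set Ω → ℝ) : ℝ :=
  sSup {x | ∃ T : Finset (Set Ω), IsFinPart 𝒜L T ∧
    x = ∑ A ∈ T, sInf {y | ∃ i, H i ⊆ A ∧ y = X i} * μ A}

/-- Upper Stieltjes integral of `X : ℒ → ℝ` with respect to `μ` on `𝒜L`. -/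
noncomputable def upperSInt {ι : Type*} (H : ι → Set Ω) (𝒜L : Set (Set Ω))
    (X : ι → ℝ) (μ : Set Ω → ℝ) : ℝ :=
  sInf {x | ∃ T : Finset (Set Ω), IsFinPart 𝒜L T ∧
    x = ∑ A ∈ T, sSup {y | ∃ i, H i ⊆ A ∧ y = X i} * μ A}

/-- `𝒜L`-continuity of a bounded function `X : ℒ → ℝ`. -/
def ALContinuous {ι : Type*} (H : ι → Set Ω) (𝒜L : Set (Set Ω)) (X : ι → ℝ) : Prop :=
  (∃ M : ℝ, ∀ i, |X i| ≤ M) ∧ ∀ t : ℝ, ∀ ε > (0 : ℝ), ∃ A ∈ 𝒜L,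
    (⋃ i ∈ {i | t + ε ≤ X i}, H i) ⊆ A ∧ A ⊆ ⋃ i ∈ {i | t ≤ X i}, H i

/-- Countable additivity of `P` on the field `𝒜`. -/
def CountablyAdditiveOn (𝒜 : Set (Set Ω)) (P : Set Ω → ℝ) : Prop :=
  ∀ A : ℕ → Set Ω, (∀ n, A n ∈ 𝒜) → (Pairwise fun m n => Disjoint (A m) (A n)) →
    (⋃ n, A n) ∈ 𝒜 → HasSum (fun n => P (A n)) (P (⋃ n, A n))

/-- A (normalized) capacity on the field `𝒜`. -/
def IsCapacity (𝒜 : Set (Set Ω)) (φ : Set Ω → ℝ) : Prop :=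
  φ ∅ = 0 ∧ φ Set.univ = 1 ∧ (∀ A ∈ 𝒜, 0 ≤ φ A ∧ φ A ≤ 1) ∧
    ∀ A ∈ 𝒜, ∀ B ∈ 𝒜, A ⊆ B → φ A ≤ φ B

/-- Total monotonicity of a capacity `φ` on the field `𝒜`. -/
def TotallyMonotone (𝒜 : Set (Set Ω)) (φ : Set Ω → ℝ) : Prop :=
  ∀ n : ℕ, 2 ≤ n → ∀ A : Fin n → Set Ω, (∀ i, A i ∈ 𝒜) →
    ∑ s ∈ Finset.univ.powerset.filter (fun s : Finset (Fin n) => s.Nonempty),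
      (-1 : ℝ) ^ (s.card - 1) * φ (⋂ i ∈ s, A i) ≤ φ (⋃ i, A i)

/-- Restriction of a conditional probability to the domain `𝒜 × ℬ⁰`, viewed as a point
of the product space `ℝ^(𝒜 × ℬ⁰)`. -/
def restrictPairs (𝒜 ℬ : Set (Set Ω)) (Q : Set Ω → Set Ω → ℝ)
    (p : {p : Set Ω × Set Ω // p.1 ∈ 𝒜 ∧ p.2 ∈ ℬ ∧ p.2.Nonempty}) : ℝ :=
  Q p.val.1 p.val.2

/-- Restriction of a set function to the domain `𝒜`, viewed as a point of `ℝ^𝒜`. -/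
def restrictDom (𝒜 : Set (Set Ω)) (μ : Set Ω → ℝ) (A : {A : Set Ω // A ∈ 𝒜}) : ℝ :=
  μ A.val

/-- The field of all unions of members of the partition `H`, i.e. `⟨ℒ⟩*`. -/
def unionsOf {ι : Type*} (H : ι → Set Ω) : Set (Set Ω) :=
  {A | ∃ S : Set ι, A = ⋃ i ∈ S, H i}

/-- The set `𝒬^fd` of fully ℒ-disintegrable full conditional probabilities on `𝒜`
extending `{π, σ}`. -/
def QfdSet {ι : Type*} (𝒜 𝒜L : Set (Set Ω)) (H : ι → Set Ω)
    (π : Set Ω → ℝ) (σ : Set Ω → ι → ℝ) : Set (Set Ω → Set Ω → ℝ) :=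
  {Q | IsFCP 𝒜 Q ∧ ExtendsPriorStrategy 𝒜 𝒜L H π σ Q ∧
    ∀ F ∈ 𝒜, ∀ K ∈ 𝒜L, K.Nonempty →
      Q F K = lowerSInt H 𝒜L (fun i => σ F i) fun B => Q B K}

/-- The set `𝒬^fsc` of fully strongly ℒ-conglomerable full conditional probabilities
on `𝒜` extending `{π, σ}`. -/
def QfscSet {ι : Type*} (𝒜 𝒜L : Set (Set Ω)) (H : ι → Set Ω)
    (π : Set Ω → ℝ) (σ : Set Ω → ι → ℝ) : Set (Set Ω → Set Ω → ℝ) :=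
  {Q | IsFCP 𝒜 Q ∧ ExtendsPriorStrategy 𝒜 𝒜L H π σ Q ∧
    ∀ F ∈ 𝒜, ∀ K ∈ 𝒜L, K.Nonempty → ∀ B ∈ 𝒜L, B.Nonempty → B ⊆ K →
      Q B K * sInf {x | ∃ i, H i ⊆ B ∧ x = σ F i} ≤ Q (F ∩ B) K ∧
      Q (F ∩ B) K ≤ Q B K * sSup {x | ∃ i, H i ⊆ B ∧ x = σ F i}}

/-- The set `𝒫^sc` of strongly ℒ-conglomerable joint probabilities consistent with `{π, σ}`. -/
def PscSet {ι : Type*} (𝒜 𝒜L : Set (Set Ω)) (H : ι → Set Ω)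
    (π : Set Ω → ℝ) (σ : Set Ω → ι → ℝ) : Set (Set Ω → ℝ) :=
  {μ | (∃ P ∈ FCPSet 𝒜 𝒜L H π σ, μ = fun F => P F Set.univ) ∧
    ∀ F ∈ 𝒜, ∀ B ∈ 𝒜L, B.Nonempty →
      π B * sInf {x | ∃ i, H i ⊆ B ∧ x = σ F i} ≤ μ (F ∩ B) ∧
      μ (F ∩ B) ≤ π B * sSup {x | ∃ i, H i ⊆ B ∧ x = σ F i}}

/-- The set `𝒫^fd` of fully ℒ-disintegrable conditional probabilities on `𝒜 × 𝒜L⁰`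
extending `{π, σ}`. -/
def PfdSet {ι : Type*} (𝒜 𝒜L : Set (Set Ω)) (H : ι → Set Ω)
    (π : Set Ω → ℝ) (σ : Set Ω → ι → ℝ) : Set (Set Ω → Set Ω → ℝ) :=
  {P | (∀ E ∈ 𝒜, ∀ K ∈ 𝒜L, K.Nonempty → P E K = P (E ∩ K) K) ∧
    (∀ K ∈ 𝒜L, K.Nonempty → IsFAP 𝒜 fun E => P E K) ∧
    (∀ E ∈ 𝒜, ∀ F ∈ 𝒜, ∀ K ∈ 𝒜L, K.Nonempty → E ∩ K ∈ 𝒜L → (E ∩ K).Nonempty →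
      P (E ∩ F) K = P E K * P F (E ∩ K)) ∧
    (∀ B ∈ 𝒜L, P B Set.univ = π B) ∧ (∀ F ∈ 𝒜, ∀ i, P F (H i) = σ F i) ∧
    ∀ F ∈ 𝒜, ∀ K ∈ 𝒜L, K.Nonempty →
      P F K = lowerSInt H 𝒜L (fun i => σ F i) fun B => P B K}

/-- The Choquet integral `C∫ X dφ = ∫₀¹ φ₊((X ≥ t)) dt` of a `[0,1]`-valued `X : ℒ → ℝ`
with respect to a capacity `φ` on `𝒜L`, where `φ₊` is the inner extension of `φ`. -/
noncomputable def choquetInt {ι : Type*} (H : ι → Set Ω) (𝒜L : Set (Set Ω))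
    (X : ι → ℝ) (φ : Set Ω → ℝ) : ℝ :=
  ∫ t in (0 : ℝ)..(1 : ℝ),
    sSup {y | ∃ B ∈ 𝒜L, B ⊆ (⋃ i ∈ {i | t ≤ X i}, H i) ∧ y = φ B}

/-!
The inclusion `⊆` is restriction. For `⊇`, extend a full conditional probability `π'` on `𝒜L`
together with `σ` by compactness of `[0,1]^(2^Ω × 2^Ω)`: it suffices to satisfy the axioms at
finitely many events. On the atoms of the field generated by finitely many events of `𝒜L`, `π'`
is lexicographic: conditioning on a union `K` of atoms is done by the first of the layers
`π' (· | A₀), π' (· | A₁), …` that charges `K`, where `A₀ = Ω` and `A_{k+1}` is the union of the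
`π' (· | A_k)`-null atoms of `A_k`. Each layer is lifted to `𝒜` by spreading the mass of an atom
according to `σ (· | H i)` for some `H i` inside it, and a final counting layer charges every
remaining nonempty event. Conditioning on the first charging layer satisfies the axioms, agrees
with `π'` on `𝒜L`, and with `σ` on each `H i`, which is itself an atom.
-/

namespace IsSetField

variable {𝒜 : Set (Set Ω)}

theorem empty_mem (h : IsSetField 𝒜) : ∅ ∈ 𝒜 := by
  simpa using h.2.1 _ h.1

theorem inter_mem (h : IsSetField 𝒜) {A B : Set Ω} (hA : A ∈ 𝒜) (hB : B ∈ 𝒜) :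
    A ∩ B ∈ 𝒜 := by
  simpa [Set.compl_union] using h.2.1 _ (h.2.2 _ (h.2.1 _ hA) _ (h.2.1 _ hB))

theorem diff_mem (h : IsSetField 𝒜) {A B : Set Ω} (hA : A ∈ 𝒜) (hB : B ∈ 𝒜) :
    A \ B ∈ 𝒜 :=
  h.inter_mem hA (h.2.1 _ hB)

theorem biUnion_mem (h : IsSetField 𝒜) {α : Type*} (t : Finset α) {f : α → Set Ω}
    (hf : ∀ a ∈ t, f a ∈ 𝒜) : (⋃ a ∈ t, f a) ∈ 𝒜 := by
  induction t using Finset.induction_on with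
  | empty => simpa using h.empty_mem
  | insert a t _ ih =>
    rw [Finset.set_biUnion_insert]
    exact h.2.2 _ (hf a (t.mem_insert_self a)) _ (ih fun b hb => hf b (Finset.mem_insert_of_mem hb))

theorem biInter_mem (h : IsSetField 𝒜) {α : Type*} (t : Finset α) {f : α → Set Ω}
    (hf : ∀ a ∈ t, f a ∈ 𝒜) : (⋂ a ∈ t, f a) ∈ 𝒜 := by
  induction t using Finset.induction_on with
  | empty => simpa using h.1
  | insert a t _ ih =>
    rw [Finset.set_biInter_insert]
    exact h.inter_mem (hf a (t.mem_insert_self a))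
      (ih fun b hb => hf b (Finset.mem_insert_of_mem hb))

end IsSetField

def IsContentOn (𝒜 : Set (Set Ω)) (μ : Set Ω → ℝ) : Prop :=
  (∀ A ∈ 𝒜, 0 ≤ μ A) ∧ ∀ A ∈ 𝒜, ∀ B ∈ 𝒜, Disjoint A B → μ (A ∪ B) = μ A + μ B

namespace IsContentOn

variable {𝒜 : Set (Set Ω)} {μ : Set Ω → ℝ}

theorem inter_add_diff (h𝒜 : IsSetField 𝒜) (hμ : IsContentOn 𝒜 μ) {F K : Set Ω}
    (hF : F ∈ 𝒜) (hK : K ∈ 𝒜) : μ (F ∩ K) + μ (F \ K) = μ F := by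
  rw [← hμ.2 _ (h𝒜.inter_mem hF hK) _ (h𝒜.diff_mem hF hK)
    (Set.disjoint_sdiff_inter.symm.mono_left le_rfl), Set.inter_union_sdiff]

theorem mono (h𝒜 : IsSetField 𝒜) (hμ : IsContentOn 𝒜 μ) {F G : Set Ω} (hF : F ∈ 𝒜)
    (hG : G ∈ 𝒜) (hFG : F ⊆ G) : μ F ≤ μ G := by
  have := hμ.inter_add_diff h𝒜 hG hF
  rw [Set.inter_eq_right.2 hFG] at this
  linarith [hμ.1 _ (h𝒜.diff_mem hG hF)]

theorem biUnion (h𝒜 : IsSetField 𝒜) (hμ : IsContentOn 𝒜 μ) {α : Type*} (t : Finset α)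
    {f : α → Set Ω} (hf : ∀ a ∈ t, f a ∈ 𝒜) (hd : Set.PairwiseDisjoint ↑t f) :
    μ (⋃ a ∈ t, f a) = ∑ a ∈ t, μ (f a) := by
  induction t using Finset.induction_on with
  | empty => simpa using hμ.2 _ h𝒜.empty_mem _ h𝒜.empty_mem (Set.disjoint_empty _)
  | insert a t ha ih =>
    rw [Finset.set_biUnion_insert, Finset.sum_insert ha,
      hμ.2 _ (hf a (t.mem_insert_self a)) _
        (h𝒜.biUnion_mem t fun b hb => hf b (Finset.mem_insert_of_mem hb)) ?_,
      ih (fun b hb => hf b (Finset.mem_insert_of_mem hb))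
        (hd.subset (by simp))]
    refine Set.disjoint_iUnion₂_right.2 fun b hb => hd (by simp) (by simp [hb]) ?_
    rintro rfl
    exact ha hb

theorem sum_mul {α : Type*} (t : Finset α) {c : α → ℝ} {ν : α → Set Ω → ℝ}
    (hc : ∀ a ∈ t, 0 ≤ c a) (hν : ∀ a ∈ t, IsContentOn 𝒜 (ν a)) :
    IsContentOn 𝒜 fun F => ∑ a ∈ t, c a * ν a F := by
  refine ⟨fun A hA => Finset.sum_nonneg fun a ha => mul_nonneg (hc a ha) ((hν a ha).1 A hA),
    fun A hA B hB hAB => ?_⟩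
  rw [← Finset.sum_add_distrib]
  exact Finset.sum_congr rfl fun a ha => by rw [(hν a ha).2 A hA B hB hAB, mul_add]

end IsContentOn

theorem IsFAP.isContentOn {𝒜 : Set (Set Ω)} {P : Set Ω → ℝ} (hP : IsFAP 𝒜 P) :
    IsContentOn 𝒜 P :=
  ⟨fun A hA => (hP.1 A hA).1, hP.2.2⟩

theorem IsFAP.mono {𝒜 𝒜' : Set (Set Ω)} {P : Set Ω → ℝ} (hP : IsFAP 𝒜 P) (h : 𝒜' ⊆ 𝒜) :
    IsFAP 𝒜' P :=
  ⟨fun A hA => hP.1 A (h hA), hP.2.1, fun A hA B hB => hP.2.2 A (h hA) B (h hB)⟩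

theorem IsFCP.mono {𝒜 𝒜' : Set (Set Ω)} {P : Set Ω → Set Ω → ℝ} (hP : IsFCP 𝒜 P)
    (h : 𝒜' ⊆ 𝒜) : IsFCP 𝒜' P :=
  ⟨fun E hE K hK => hP.1 E (h hE) K (h hK), fun K hK hne => (hP.2.1 K (h hK) hne).mono h,
    fun E hE F hF K hK => hP.2.2 E (h hE) F (h hF) K (h hK)⟩

theorem IsFCP.apply_self {𝒜 : Set (Set Ω)} {P : Set Ω → Set Ω → ℝ} (hP : IsFCP 𝒜 P)
    (h𝒜 : IsSetField 𝒜) {K : Set Ω} (hK : K ∈ 𝒜) (hne : K.Nonempty) : P K K = 1 := by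
  have := hP.1 _ h𝒜.1 _ hK hne
  rw [Set.univ_inter] at this
  rw [← this]
  exact (hP.2.1 K hK hne).2.1

noncomputable def countingContent (P : Finset Ω) (F : Set Ω) : ℝ :=
  ((P.filter (· ∈ F)).card : ℝ)

theorem isContentOn_countingContent (𝒜 : Set (Set Ω)) (P : Finset Ω) :
    IsContentOn 𝒜 (countingContent P) := by
  refine ⟨fun _ _ => Nat.cast_nonneg _, fun A _ B _ hAB => ?_⟩
  simp only [countingContent, Set.mem_union, Finset.filter_or]
  rw [Finset.card_union_of_disjoint, Nat.cast_add]
  exact Finset.disjoint_filter.2 fun x _ hA hB => Set.disjoint_left.1 hAB hA hB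

theorem countingContent_pos {P : Finset Ω} {X : Set Ω} (h : (X ∩ P).Nonempty) :
    0 < countingContent P X := by
  obtain ⟨ω, hωX, hωP⟩ := h
  exact Nat.cast_pos.2 (Finset.card_pos.2 ⟨ω, Finset.mem_filter.2 ⟨hωP, hωX⟩⟩)

/-- The junk value `0` (outside `𝒜`, or when no layer charges `K`) keeps all values in `[0, 1]`. -/
noncomputable def lexCond (𝒜 : Set (Set Ω)) (M : ℕ → Set Ω → ℝ) (F K : Set Ω) : ℝ :=
  if h : F ∈ 𝒜 ∧ K ∈ 𝒜 ∧ ∃ k, 0 < M k K then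
    M (Nat.find h.2.2) (F ∩ K) / M (Nat.find h.2.2) K
  else 0

def seqCons (m : Set Ω → ℝ) (M : ℕ → Set Ω → ℝ) : ℕ → Set Ω → ℝ
  | 0 => m
  | k + 1 => M k

section LexCond

variable {𝒜 : Set (Set Ω)} {M : ℕ → Set Ω → ℝ} {F K : Set Ω}

theorem lexCond_eq (hF : F ∈ 𝒜) (hK : K ∈ 𝒜) (hex : ∃ k, 0 < M k K) :
    lexCond 𝒜 M F K = M (Nat.find hex) (F ∩ K) / M (Nat.find hex) K := by
  rw [lexCond, dif_pos ⟨hF, hK, hex⟩]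

theorem lexCond_cons_of_pos {m : Set Ω → ℝ} (hF : F ∈ 𝒜) (hK : K ∈ 𝒜) (hm : 0 < m K) :
    lexCond 𝒜 (seqCons m M) F K = m (F ∩ K) / m K := by
  have hex : ∃ k, 0 < seqCons m M k K := ⟨0, hm⟩
  rw [lexCond_eq hF hK hex, (Nat.find_eq_zero hex).2 hm]
  rfl

theorem lexCond_cons_of_eq_zero {m : Set Ω → ℝ} (hm : m K = 0) :
    lexCond 𝒜 (seqCons m M) F K = lexCond 𝒜 M F K := by
  have hiff : (∃ k, 0 < seqCons m M k K) ↔ ∃ k, 0 < M k K :=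
    ⟨fun ⟨k, hk⟩ => by cases k with
      | zero => exact absurd hk (by simp [seqCons, hm])
      | succ k => exact ⟨k, hk⟩,
     fun ⟨k, hk⟩ => ⟨k + 1, hk⟩⟩
  by_cases hFK : F ∈ 𝒜 ∧ K ∈ 𝒜 ∧ ∃ k, 0 < M k K
  · obtain ⟨hF, hK, hex⟩ := hFK
    rw [lexCond_eq hF hK hex, lexCond_eq hF hK (hiff.2 hex),
      Nat.find_comp_succ (hiff.2 hex) hex (by simp [seqCons, hm])]
    rfl
  · rw [lexCond, lexCond, dif_neg hFK, dif_neg (by rwa [hiff])]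

variable (h𝒜 : IsSetField 𝒜)
include h𝒜

theorem lexCond_inter_self (hF : F ∈ 𝒜) (hK : K ∈ 𝒜) (hex : ∃ k, 0 < M k K) :
    lexCond 𝒜 M F K = lexCond 𝒜 M (F ∩ K) K := by
  rw [lexCond_eq hF hK hex, lexCond_eq (h𝒜.inter_mem hF hK) hK hex, Set.inter_assoc, Set.inter_self]

theorem lexCond_univ (hK : K ∈ 𝒜) (hex : ∃ k, 0 < M k K) : lexCond 𝒜 M Set.univ K = 1 := by
  rw [lexCond_eq h𝒜.1 hK hex, Set.univ_inter, div_self (Nat.find_spec hex).ne']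

variable (hM : ∀ k, IsContentOn 𝒜 (M k))
include hM

theorem lexCond_mem_Icc (F K : Set Ω) : lexCond 𝒜 M F K ∈ Set.Icc 0 1 := by
  unfold lexCond
  split_ifs with h
  · obtain ⟨hF, hK, hex⟩ := h
    have hpos : 0 < M (Nat.find hex) K := Nat.find_spec hex
    have hFK := h𝒜.inter_mem hF hK
    exact ⟨div_nonneg ((hM _).1 _ hFK) hpos.le, (div_le_one hpos).2
      ((hM _).mono h𝒜 hFK hK Set.inter_subset_right)⟩
  · exact ⟨le_rfl, zero_le_one⟩

theorem lexCond_union {A B : Set Ω} (hA : A ∈ 𝒜) (hB : B ∈ 𝒜) (hK : K ∈ 𝒜) (hAB : Disjoint A B)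
    (hex : ∃ k, 0 < M k K) :
    lexCond 𝒜 M (A ∪ B) K = lexCond 𝒜 M A K + lexCond 𝒜 M B K := by
  rw [lexCond_eq (h𝒜.2.2 _ hA _ hB) hK hex, lexCond_eq hA hK hex, lexCond_eq hB hK hex,
    Set.union_inter_distrib_right,
    (hM _).2 _ (h𝒜.inter_mem hA hK) _ (h𝒜.inter_mem hB hK)
      (hAB.mono Set.inter_subset_left Set.inter_subset_left), add_div]

theorem lexCond_inter_mul {E : Set Ω} (hE : E ∈ 𝒜) (hF : F ∈ 𝒜) (hK : K ∈ 𝒜)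
    (hexK : ∃ k, 0 < M k K) (hexEK : ∃ k, 0 < M k (E ∩ K)) :
    lexCond 𝒜 M (E ∩ F) K = lexCond 𝒜 M E K * lexCond 𝒜 M F (E ∩ K) := by
  have hEK := h𝒜.inter_mem hE hK
  -- `E ∩ K ⊆ K`, so `K` is charged no later than `E ∩ K`
  have hle : Nat.find hexK ≤ Nat.find hexEK := Nat.find_min' hexK <|
    (Nat.find_spec hexEK).trans_le ((hM _).mono h𝒜 hEK hK Set.inter_subset_right)
  rw [lexCond_eq (h𝒜.inter_mem hE hF) hK hexK, lexCond_eq hE hK hexK, lexCond_eq hF hEK hexEK]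
  rcases hle.eq_or_lt with heq | hlt
  · rw [← heq, show E ∩ F ∩ K = F ∩ (E ∩ K) by ext; simp only [Set.mem_inter_iff]; tauto]
    have hEKpos : 0 < M (Nat.find hexK) (E ∩ K) := heq ▸ Nat.find_spec hexEK
    field_simp
  · set k := Nat.find hexK
    have hEK0 : M k (E ∩ K) = 0 := le_antisymm (not_lt.1 (Nat.find_min hexEK hlt)) ((hM k).1 _ hEK)
    have hEFK0 : M k (E ∩ F ∩ K) = 0 := le_antisymm
      (hEK0 ▸ (hM k).mono h𝒜 (h𝒜.inter_mem (h𝒜.inter_mem hE hF) hK) hEK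
        fun x hx => ⟨hx.1.1, hx.2⟩)
      ((hM k).1 _ (h𝒜.inter_mem (h𝒜.inter_mem hE hF) hK))
    rw [hEFK0, hEK0, zero_div, zero_mul]

end LexCond

namespace IsStrategy

variable {ι : Type*} {𝒜 : Set (Set Ω)} {H : ι → Set Ω} {σ : Set Ω → ι → ℝ}

theorem eq_zero_of_disjoint (h𝒜 : IsSetField 𝒜) (hσ : IsStrategy 𝒜 H σ) {i : ι} {W : Set Ω}
    (hW : W ∈ 𝒜) (hd : Disjoint (H i) W) : σ W i = 0 := by
  have hadd : σ (W ∪ Wᶜ) i = σ W i + σ Wᶜ i :=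
    (hσ i).1.2.2 W hW Wᶜ (h𝒜.2.1 W hW) disjoint_compl_right
  have hone : σ Set.univ i = 1 := (hσ i).1.2.1
  rw [Set.union_compl_self, hone, (hσ i).2 Wᶜ (h𝒜.2.1 W hW) hd.subset_compl_right] at hadd
  linarith

theorem inter_eq (h𝒜 : IsSetField 𝒜) (hσ : IsStrategy 𝒜 H σ) {i : ι} {F W : Set Ω}
    (hF : F ∈ 𝒜) (hW : W ∈ 𝒜) (hiW : H i ⊆ W) : σ (F ∩ W) i = σ F i := by
  have := (hσ i).1.isContentOn.inter_add_diff h𝒜 hF hW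
  rwa [hσ.eq_zero_of_disjoint h𝒜 (h𝒜.diff_mem hF hW)
    (Set.disjoint_of_subset_left hiW Set.disjoint_sdiff_right), add_zero] at this

end IsStrategy

section LiftLayer

variable {α : Type*} {𝒜L 𝒜 : Set (Set Ω)} {π' : Set Ω → Set Ω → ℝ} {f : Ω → α}
  {ν : Set Ω → α → ℝ}

/-- An extension of `π' (· | f ⁻¹' V)` from unions of fibres of `f` to `𝒜`: the mass of each
fibre is spread according to `ν`. -/
noncomputable def liftLayer (π' : Set Ω → Set Ω → ℝ) (f : Ω → α) (ν : Set Ω → α → ℝ)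
    (V : Finset α) (F : Set Ω) : ℝ :=
  ∑ a ∈ V, π' (f ⁻¹' {a}) (f ⁻¹' V) * ν F a

theorem preimage_finset_mem (h𝒜L : IsSetField 𝒜L) (hfib : ∀ a, f ⁻¹' {a} ∈ 𝒜L)
    (V : Finset α) : f ⁻¹' V ∈ 𝒜L := by
  rw [← Set.biUnion_preimage_singleton]
  simpa using h𝒜L.biUnion_mem V fun a _ => hfib a

theorem IsContentOn.preimage_finset (h𝒜L : IsSetField 𝒜L) (hfib : ∀ a, f ⁻¹' {a} ∈ 𝒜L)
    {μ : Set Ω → ℝ} (hμ : IsContentOn 𝒜L μ) (V : Finset α) :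
    μ (f ⁻¹' V) = ∑ a ∈ V, μ (f ⁻¹' {a}) := by
  rw [← Set.biUnion_preimage_singleton]
  simpa using hμ.biUnion h𝒜L V (fun a _ => hfib a)
    fun a _ b _ hab => Set.disjoint_singleton.2 hab |>.preimage f

variable (h𝒜L : IsSetField 𝒜L) (hfib : ∀ a, f ⁻¹' {a} ∈ 𝒜L) (hπ' : IsFCP 𝒜L π')
include h𝒜L hfib hπ'

theorem isContentOn_liftLayer (hν : ∀ a, IsContentOn 𝒜 (ν · a)) {V : Finset α}
    (hV : (f ⁻¹' V).Nonempty) : IsContentOn 𝒜 (liftLayer π' f ν V) :=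
  IsContentOn.sum_mul V
    (fun a _ => ((hπ'.2.1 _ (preimage_finset_mem h𝒜L hfib V) hV).1 _ (hfib a)).1)
    fun a _ => hν a

variable (h𝒜 : IsSetField 𝒜) (hL : 𝒜L ⊆ 𝒜) (hν : IsStrategy 𝒜 (fun a => f ⁻¹' {a}) ν)
include h𝒜 hL hν

theorem liftLayer_preimage {V : Finset α} (hV : (f ⁻¹' V).Nonempty) (W : Finset α) :
    liftLayer π' f ν V (f ⁻¹' W) = π' (f ⁻¹' W) (f ⁻¹' V) := by
  have hK := preimage_finset_mem h𝒜L hfib V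
  have hWmem := preimage_finset_mem h𝒜L hfib W
  have hνW : ∀ a, ν (f ⁻¹' W) a = if a ∈ W then 1 else 0 := fun a => by
    split_ifs with ha
    · exact (hν a).2 _ (hL hWmem) (Set.preimage_mono (by simpa using ha))
    · exact hν.eq_zero_of_disjoint h𝒜 (hL hWmem)
        (Set.disjoint_singleton_left.2 (by simpa using ha) |>.preimage f)
  rw [hπ'.1 _ hWmem _ hK hV, Set.inter_comm, ← Set.preimage_inter, ← Finset.coe_inter,
    (hπ'.2.1 _ hK hV).isContentOn.preimage_finset h𝒜L hfib, ← Finset.sum_ite_mem]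
  simp only [liftLayer, hνW, mul_ite, mul_one, mul_zero]

theorem liftLayer_inter_preimage {U V : Finset α} (hVU : V ⊆ U) (hV : (f ⁻¹' V).Nonempty)
    {F : Set Ω} (hF : F ∈ 𝒜) :
    liftLayer π' f ν U (F ∩ f ⁻¹' V) = π' (f ⁻¹' V) (f ⁻¹' U) * liftLayer π' f ν V F := by
  have hA := preimage_finset_mem h𝒜L hfib U
  have hK := preimage_finset_mem h𝒜L hfib V
  have hKA : f ⁻¹' (V : Set α) ⊆ f ⁻¹' U := Set.preimage_mono (by simpa using hVU)
  have hνFK : ∀ a, ν (F ∩ f ⁻¹' V) a = if a ∈ V then ν F a else 0 := fun a => by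
    split_ifs with ha
    · exact hν.inter_eq h𝒜 hF (hL hK) (Set.preimage_mono (by simpa using ha))
    · exact hν.eq_zero_of_disjoint h𝒜 (h𝒜.inter_mem hF (hL hK))
        ((Set.disjoint_singleton_left.2 (by simpa using ha) |>.preimage f).mono_right
          Set.inter_subset_right)
  -- (C3) with `f ⁻¹' {a} ⊆ f ⁻¹' V ⊆ f ⁻¹' U`
  have hC3 : ∀ a ∈ V, π' (f ⁻¹' {a}) (f ⁻¹' U) =
      π' (f ⁻¹' V) (f ⁻¹' U) * π' (f ⁻¹' {a}) (f ⁻¹' V) := fun a ha => by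
    have := hπ'.2.2 _ hK _ (hfib a) _ hA (hV.mono hKA) (by rwa [Set.inter_eq_left.2 hKA])
    rwa [Set.inter_eq_left.2 hKA, Set.inter_eq_right.2 (Set.preimage_mono (by simpa using ha))]
      at this
  simp only [liftLayer, hνFK, mul_ite, mul_zero]
  rw [Finset.sum_ite_mem, Finset.inter_eq_right.2 hVU, Finset.mul_sum]
  exact Finset.sum_congr rfl fun a ha => by rw [hC3 a ha, mul_assoc]

end LiftLayer

theorem exists_lexCond_eq_liftLayer {α : Type*} {𝒜L 𝒜 : Set (Set Ω)}
    {π' : Set Ω → Set Ω → ℝ} {f : Ω → α} {ν : Set Ω → α → ℝ} (h𝒜L : IsSetField 𝒜L)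
    (hfib : ∀ a, f ⁻¹' {a} ∈ 𝒜L) (hπ' : IsFCP 𝒜L π') (h𝒜 : IsSetField 𝒜) (hL : 𝒜L ⊆ 𝒜)
    (hν : IsStrategy 𝒜 (fun a => f ⁻¹' {a}) ν) (hf : Function.Surjective f) {c : Set Ω → ℝ}
    (hc : IsContentOn 𝒜 c) (U : Finset α) :
    ∃ M : ℕ → Set Ω → ℝ, (∀ k, IsContentOn 𝒜 (M k)) ∧ c ∈ Set.range M ∧
      ∀ V ⊆ U, V.Nonempty → ∀ F ∈ 𝒜, lexCond 𝒜 M F (f ⁻¹' V) = liftLayer π' f ν V F := by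
  have hne : ∀ {V : Finset α}, V.Nonempty → (f ⁻¹' V).Nonempty := fun ⟨a, ha⟩ =>
    (hf a).elim fun ω hω => ⟨ω, by simpa [hω] using ha⟩
  induction U using Finset.strongInduction with
  | H U ih =>
  rcases U.eq_empty_or_nonempty with rfl | hU
  · exact ⟨fun _ => c, fun _ => hc, ⟨0, rfl⟩,
      fun V hV hVne => absurd (Finset.subset_empty.1 hV) hVne.ne_empty⟩
  have hA := preimage_finset_mem h𝒜L hfib U
  have hπ'A := hπ'.2.1 _ hA (hne hU)
  -- the fibres that are null for `π' (· | f ⁻¹' U)` carry the remaining layers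
  set U' := U.filter fun a => π' (f ⁻¹' {a}) (f ⁻¹' U) = 0
  have hU' : U' ⊂ U := by
    refine Finset.filter_ssubset.2 (by_contra fun h => ?_)
    push Not at h
    have hAA := hπ'.apply_self h𝒜L hA (hne hU)
    rw [hπ'A.isContentOn.preimage_finset h𝒜L hfib, Finset.sum_eq_zero h] at hAA
    exact zero_ne_one hAA
  obtain ⟨M, hM, hcM, hMV⟩ := ih U' hU'
  refine ⟨seqCons (liftLayer π' f ν U) M, fun k => ?_, ?_, fun V hVU hV F hF => ?_⟩
  · cases k with
    | zero => exact isContentOn_liftLayer h𝒜L hfib hπ' (fun a => (hν a).1.isContentOn) (hne hU)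
    | succ k => exact hM k
  · obtain ⟨k, hk⟩ := hcM
    exact ⟨k + 1, hk⟩
  have hK := preimage_finset_mem h𝒜L hfib V
  have hlift := liftLayer_preimage h𝒜L hfib hπ' h𝒜 hL hν (hne hU) V
  rcases (hπ'A.1 _ hK).1.lt_or_eq with hpos | hzero
  · rw [lexCond_cons_of_pos hF (hL hK) (hlift ▸ hpos),
      liftLayer_inter_preimage h𝒜L hfib hπ' h𝒜 hL hν hVU (hne hV) hF, hlift]
    field_simp
  · rw [lexCond_cons_of_eq_zero (hlift.trans hzero.symm)]
    refine hMV V (fun a ha => Finset.mem_filter.2 ⟨hVU ha, le_antisymm ?_ ((hπ'A.1 _ (hfib a)).1)⟩)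
      hV F hF
    exact hzero ▸ hπ'A.isContentOn.mono h𝒜L (hfib a) hK
      (Set.preimage_mono (by simpa using ha))

section Partition

variable {ι : Type*} {H : ι → Set Ω}

theorem IsPartition.eq_of_subset (hH : IsPartition H) {i j : ι} (h : H i ⊆ H j) : i = j := by
  by_contra hij
  exact (hH.1 i).ne_empty (Set.subset_empty_iff.1 fun x hx => (hH.2.1 hij).le_bot ⟨hx, h hx⟩)

theorem IsFieldOver.subset_or_disjoint {𝒜L : Set (Set Ω)} (hH : IsPartition H)
    (h𝒜L : IsFieldOver H 𝒜L) (i : ι) {B : Set Ω} (hB : B ∈ 𝒜L) : H i ⊆ B ∨ Disjoint (H i) B := by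
  obtain ⟨S, rfl⟩ := h𝒜L.2.2 B hB
  by_cases hi : i ∈ S
  · exact Or.inl (Set.subset_biUnion_of_mem hi)
  · exact Or.inr (Set.disjoint_iUnion₂_right.2 fun j hj => hH.2.1 fun hij => hi (hij ▸ hj))

universe u

/-- The atoms of the field generated by finitely many members of `𝒜L`, as the fibres of a map
onto a finite type. -/
theorem exists_finite_saturating_map {Ω : Type u} {ι : Type*} {H : ι → Set Ω}
    {𝒜L : Set (Set Ω)} (hH : IsPartition H) (h𝒜L : IsFieldOver H 𝒜L) (sL : Finset (Set Ω))
    (hsL : ↑sL ⊆ 𝒜L) :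
    ∃ (α : Type u) (f : Ω → α), Finite α ∧ Function.Surjective f ∧ (∀ a, f ⁻¹' {a} ∈ 𝒜L) ∧
      (∀ B ∈ sL, f ⁻¹' (f '' B) = B) ∧ ∀ i, ∀ ω ∈ H i, H i ⊆ f ⁻¹' {f ω} := by
  set pat : Ω → Finset (Set Ω) := fun ω => sL.filter (ω ∈ ·)
  have hpat : ∀ ω ω', pat ω = pat ω' ↔ ∀ B ∈ sL, (ω ∈ B ↔ ω' ∈ B) := fun ω ω' => by
    simp only [pat, Finset.ext_iff, Finset.mem_filter]
    exact ⟨fun h B hB => by simpa [hB] using h B,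
      fun h B => by by_cases hB : B ∈ sL <;> simp [hB, h]⟩
  have hfib : ∀ ω, {ω' | pat ω' = pat ω} = ⋂ B ∈ sL, {ω' | ω' ∈ B ↔ ω ∈ B} := fun ω => by
    ext ω'
    simp [hpat]
  refine ⟨Set.range pat, Set.rangeFactorization pat,
    ((sL.powerset : Set (Finset (Set Ω))).toFinite.subset ?_).to_subtype,
    Set.rangeFactorization_surjective, ?_, fun B hB => ?_, fun i ω hω ω' hω' => ?_⟩
  · rintro _ ⟨ω, rfl⟩
    exact Finset.mem_powerset.2 (Finset.filter_subset _ _)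
  · rintro ⟨_, ω, rfl⟩
    have : Set.rangeFactorization pat ⁻¹' {⟨pat ω, ω, rfl⟩} = {ω' | pat ω' = pat ω} := by
      ext; simp [Set.rangeFactorization, Subtype.ext_iff]
    rw [this, hfib]
    refine h𝒜L.1.biInter_mem sL fun B hB => ?_
    by_cases hωB : ω ∈ B
    · simpa [hωB] using hsL hB
    · simpa [hωB, Set.compl_def] using h𝒜L.1.2.1 B (hsL hB)
  · refine (Set.subset_preimage_image _ _).antisymm' ?_
    rintro ω ⟨ω', hω'B, hω'⟩
    simp only [Set.rangeFactorization, Subtype.mk.injEq] at hω'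
    exact ((hpat ω' ω).1 hω' B hB).1 hω'B
  · simp only [Set.mem_preimage, Set.mem_singleton_iff, Set.rangeFactorization, Subtype.mk.injEq]
    refine (hpat ω' ω).2 fun B hB => ?_
    rcases IsFieldOver.subset_or_disjoint hH h𝒜L i (hsL hB) with hiB | hiB
    · exact ⟨fun _ => hiB hω, fun _ => hiB hω'⟩
    · exact ⟨fun h => absurd h (hiB.notMem_of_mem_left hω'),
        fun h => absurd h (hiB.notMem_of_mem_left hω)⟩

theorem eq_preimage_singleton_of_saturated {α : Type*} {f : Ω → α} {B : Set Ω} {ω : Ω}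
    (hsat : f ⁻¹' (f '' B) = B) (hB : B ⊆ f ⁻¹' {f ω}) (hω : ω ∈ B) : B = f ⁻¹' {f ω} := by
  refine hB.antisymm ?_
  rw [← hsat]
  exact Set.preimage_mono (Set.singleton_subset_iff.2 ⟨ω, hω, rfl⟩)

end Partition

theorem exists_finset_forall_nonempty_inter (T : Finset (Set Ω)) :
    ∃ P : Finset Ω, ∀ X ∈ T, X.Nonempty → (X ∩ P).Nonempty := by
  induction T using Finset.induction_on with
  | empty => exact ⟨∅, by simp⟩
  | insert X T _ ih =>
    obtain ⟨P, hP⟩ := ih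
    by_cases hX : X.Nonempty
    · refine ⟨insert hX.some P,
        Finset.forall_mem_insert _ _ _ |>.2 ⟨fun _ => ?_, fun Y hY hYne => ?_⟩⟩
      · exact ⟨hX.some, hX.some_mem, by simp⟩
      · exact (hP Y hY hYne).mono (Set.inter_subset_inter_right _ (by simp))
    · exact ⟨P, Finset.forall_mem_insert _ _ _ |>.2 ⟨fun h => absurd h hX, hP⟩⟩

def IsLocalExtension {ι : Type*} (𝒜L : Set (Set Ω)) (H : ι → Set Ω)
    (π' : Set Ω → Set Ω → ℝ) (σ : Set Ω → ι → ℝ) (s : Finset (Set Ω))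
    (q : Set Ω → Set Ω → ℝ) : Prop :=
  (∀ E ∈ s, ∀ K ∈ s, K.Nonempty → q E K = q (E ∩ K) K) ∧
  (∀ K ∈ s, K.Nonempty → q Set.univ K = 1) ∧
  (∀ A ∈ s, ∀ B ∈ s, ∀ K ∈ s, K.Nonempty → Disjoint A B → q (A ∪ B) K = q A K + q B K) ∧
  (∀ E ∈ s, ∀ F ∈ s, ∀ K ∈ s, K.Nonempty → (E ∩ K).Nonempty →
    q (E ∩ F) K = q E K * q F (E ∩ K)) ∧
  (∀ B ∈ s, ∀ K ∈ s, B ∈ 𝒜L → K ∈ 𝒜L → K.Nonempty → q B K = π' B K) ∧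
  ∀ F ∈ s, ∀ i, H i ∈ s → q F (H i) = σ F i

theorem isLocalExtension_lexCond {ι : Type*} {H : ι → Set Ω} {𝒜L 𝒜 : Set (Set Ω)}
    {π' : Set Ω → Set Ω → ℝ} {σ : Set Ω → ι → ℝ} {M : ℕ → Set Ω → ℝ} {s : Finset (Set Ω)}
    (h𝒜 : IsSetField 𝒜) (hs : ↑s ⊆ 𝒜) (hM : ∀ k, IsContentOn 𝒜 (M k))
    (hpos : ∀ E ∈ s, ∀ K ∈ s, (E ∩ K).Nonempty → ∃ k, 0 < M k (E ∩ K))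
    (hπ' : ∀ B ∈ s, ∀ K ∈ s, B ∈ 𝒜L → K ∈ 𝒜L → K.Nonempty → lexCond 𝒜 M B K = π' B K)
    (hσ : ∀ F ∈ s, ∀ i, H i ∈ s → lexCond 𝒜 M F (H i) = σ F i) :
    IsLocalExtension 𝒜L H π' σ s (lexCond 𝒜 M) := by
  have hposK : ∀ K ∈ s, K.Nonempty → ∃ k, 0 < M k K := fun K hK hne => by
    simpa using hpos K hK K hK (by simpa using hne)
  exact ⟨fun E hE K hK hne => lexCond_inter_self h𝒜 (hs hE) (hs hK) (hposK K hK hne),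
    fun K hK hne => lexCond_univ h𝒜 (hs hK) (hposK K hK hne),
    fun A hA B hB K hK hne hAB =>
      lexCond_union h𝒜 hM (hs hA) (hs hB) (hs hK) hAB (hposK K hK hne),
    fun E hE F hF K hK hne hEK =>
      lexCond_inter_mul h𝒜 hM (hs hE) (hs hF) (hs hK) (hposK K hK hne) (hpos E hE K hK hEK),
    hπ', hσ⟩

theorem exists_isLocalExtension {ι : Type*} {H : ι → Set Ω} {𝒜L 𝒜 : Set (Set Ω)}
    {π' : Set Ω → Set Ω → ℝ} {σ : Set Ω → ι → ℝ} (hH : IsPartition H)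
    (h𝒜L : IsFieldOver H 𝒜L) (h𝒜 : IsSetField 𝒜) (hL : 𝒜L ⊆ 𝒜) (hσ : IsStrategy 𝒜 H σ)
    (hπ' : IsFCP 𝒜L π') (s : Finset (Set Ω)) (hs : ↑s ⊆ 𝒜) :
    ∃ q : Set Ω → Set Ω → ℝ, (∀ F K, q F K ∈ Set.Icc 0 1) ∧ IsLocalExtension 𝒜L H π' σ s q := by
  obtain ⟨α, f, hfin, hf, hfib, hsat, hconst⟩ :=
    exists_finite_saturating_map hH h𝒜L (s.filter (· ∈ 𝒜L)) fun B hB => (Finset.mem_filter.1 hB).2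
  have := Fintype.ofFinite α
  have hsat' : ∀ B ∈ s, B ∈ 𝒜L → ∃ V : Finset α, B = f ⁻¹' V := fun B hB hBL =>
    ⟨(f '' B).toFinite.toFinset, by simp [hsat B (Finset.mem_filter.2 ⟨hB, hBL⟩)]⟩
  -- each atom contains a member of `ℒ`; its strategy spreads the mass of the atom over `𝒜`
  have hidx : ∀ a, ∃ i, H i ⊆ f ⁻¹' {a} := fun a => by
    obtain ⟨ω, rfl⟩ := hf a
    obtain ⟨i, hi⟩ := Set.mem_iUnion.1 (hH.2.2.symm ▸ Set.mem_univ ω)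
    exact ⟨i, hconst i ω hi⟩
  choose idx hidx using hidx
  have hν : IsStrategy 𝒜 (fun a => f ⁻¹' {a}) fun F a => σ F (idx a) := fun a =>
    ⟨(hσ (idx a)).1, fun W hW haW => (hσ (idx a)).2 W hW ((hidx a).trans haW)⟩
  -- the last layer gives positive mass to every nonempty `E ∩ K`
  obtain ⟨P, hP⟩ := exists_finset_forall_nonempty_inter ((s ×ˢ s).image fun p => p.1 ∩ p.2)
  obtain ⟨M, hM, ⟨k₀, hk₀⟩, hMlift⟩ := exists_lexCond_eq_liftLayer h𝒜L.1 hfib hπ' h𝒜 hL hν hf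
    (isContentOn_countingContent 𝒜 P) Finset.univ
  refine ⟨lexCond 𝒜 M, lexCond_mem_Icc h𝒜 hM, isLocalExtension_lexCond h𝒜 hs hM
    (fun E hE K hK hne => ⟨k₀, hk₀ ▸ countingContent_pos
      (hP _ (Finset.mem_image.2 ⟨(E, K), Finset.mem_product.2 ⟨hE, hK⟩, rfl⟩) hne)⟩)
    (fun B hB K hK hBL hKL hne => ?_) fun F hF i hi => ?_⟩
  · obtain ⟨V, rfl⟩ := hsat' K hK hKL
    obtain ⟨W, rfl⟩ := hsat' B hB hBL
    obtain ⟨ω, hω⟩ := hne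
    rw [hMlift V V.subset_univ ⟨f ω, by simpa using hω⟩ _ (hs hB),
      liftLayer_preimage h𝒜L.1 hfib hπ' h𝒜 hL hν ⟨ω, hω⟩ W]
  · obtain ⟨ω, hω⟩ := hH.1 i
    have hHi := eq_preimage_singleton_of_saturated
      (hsat (H i) (Finset.mem_filter.2 ⟨hi, h𝒜L.2.1 i⟩)) (hconst i ω hω) hω
    have hidxi : idx (f ω) = i := hH.eq_of_subset ((hidx _).trans hHi.symm.subset)
    rw [hHi, ← Finset.coe_singleton, hMlift {f ω} (Finset.subset_univ _)
      (Finset.singleton_nonempty _) F (hs hF), liftLayer, Finset.sum_singleton,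
      Finset.coe_singleton, ← hHi, hπ'.apply_self h𝒜L.1 (h𝒜L.2.1 i) (hH.1 i), one_mul, hidxi]

section Compactness

variable {ι : Type*} {𝒜L : Set (Set Ω)} {H : ι → Set Ω} {π' : Set Ω → Set Ω → ℝ}
  {σ : Set Ω → ι → ℝ}

theorem isClosed_setOf_isLocalExtension (s : Finset (Set Ω)) :
    IsClosed {q | IsLocalExtension 𝒜L H π' σ s q} := by
  simp only [IsLocalExtension, Set.ofPred_and, Set.ofPred_forall]
  repeat' first
    | apply IsClosed.inter
    | refine isClosed_iInter fun _ => ?_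
    | exact isClosed_eq (by fun_prop) (by fun_prop)

theorem IsLocalExtension.mono {s t : Finset (Set Ω)} {q : Set Ω → Set Ω → ℝ} (hst : s ⊆ t)
    (hq : IsLocalExtension 𝒜L H π' σ t q) : IsLocalExtension 𝒜L H π' σ s q := by
  obtain ⟨h₁, h₂, h₃, h₄, h₅, h₆⟩ := hq
  exact ⟨fun E hE K hK => h₁ E (hst hE) K (hst hK), fun K hK => h₂ K (hst hK),
    fun A hA B hB K hK => h₃ A (hst hA) B (hst hB) K (hst hK),
    fun E hE F hF K hK => h₄ E (hst hE) F (hst hF) K (hst hK),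
    fun B hB K hK => h₅ B (hst hB) K (hst hK), fun F hF i hi => h₆ F (hst hF) i (hst hi)⟩

theorem exists_forall_isLocalExtension {𝒜 : Set (Set Ω)}
    (h : ∀ s : Finset (Set Ω), ↑s ⊆ 𝒜 →
      ∃ q : Set Ω → Set Ω → ℝ, (∀ F K, q F K ∈ Set.Icc 0 1) ∧ IsLocalExtension 𝒜L H π' σ s q) :
    ∃ q : Set Ω → Set Ω → ℝ, (∀ F K, q F K ∈ Set.Icc 0 1) ∧
      ∀ s : Finset (Set Ω), ↑s ⊆ 𝒜 → IsLocalExtension 𝒜L H π' σ s q := by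
  set cube : Set (Set Ω → Set Ω → ℝ) := Set.univ.pi fun _ => Set.univ.pi fun _ => Set.Icc 0 1
  have hcube : IsCompact cube := isCompact_univ_pi fun _ => isCompact_univ_pi fun _ => isCompact_Icc
  set Z : Finset (Set Ω) → Set (Set Ω → Set Ω → ℝ) := fun s =>
    cube ∩ {q | IsLocalExtension 𝒜L H π' σ (s.filter (· ∈ 𝒜)) q}
  have hZ : ∀ s, IsClosed (Z s) := fun s =>
    hcube.isClosed.inter (isClosed_setOf_isLocalExtension _)
  have hdir : Directed (· ⊇ ·) Z := fun s t =>
    ⟨s ∪ t, fun q hq => ⟨hq.1, hq.2.mono (Finset.filter_subset_filter _ Finset.subset_union_left)⟩,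
      fun q hq => ⟨hq.1, hq.2.mono (Finset.filter_subset_filter _ Finset.subset_union_right)⟩⟩
  have hne : ∀ s, (Z s).Nonempty := fun s => by
    obtain ⟨q, hq01, hq⟩ := h _ fun A hA => (Finset.mem_filter.1 hA).2
    exact ⟨q, fun F _ K _ => hq01 F K, hq⟩
  obtain ⟨q, hq⟩ := IsCompact.nonempty_iInter_of_directed_nonempty_isCompact_isClosed Z hdir hne
    (fun s => hcube.of_isClosed_subset (hZ s) Set.inter_subset_left) hZ
  have hq := Set.mem_iInter.1 hq
  refine ⟨q, fun F K => (hq ∅).1 F trivial K trivial, fun s hs => ?_⟩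
  simpa [Finset.filter_true_of_mem fun A hA => hs hA] using (hq s).2

end Compactness

theorem exists_isFCP_extension {ι : Type*} {H : ι → Set Ω} {𝒜L 𝒜 : Set (Set Ω)}
    {π' : Set Ω → Set Ω → ℝ} {σ : Set Ω → ι → ℝ} (hH : IsPartition H)
    (h𝒜L : IsFieldOver H 𝒜L) (h𝒜 : IsSetField 𝒜) (hL : 𝒜L ⊆ 𝒜) (hσ : IsStrategy 𝒜 H σ)
    (hπ' : IsFCP 𝒜L π') :
    ∃ Q, IsFCP 𝒜 Q ∧ (∀ B ∈ 𝒜L, ∀ K ∈ 𝒜L, K.Nonempty → Q B K = π' B K) ∧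
      ∀ F ∈ 𝒜, ∀ i, Q F (H i) = σ F i := by
  obtain ⟨q, hq01, hq⟩ :=
    exists_forall_isLocalExtension (exists_isLocalExtension hH h𝒜L h𝒜 hL hσ hπ')
  have hq₃ : ∀ {A B C : Set Ω}, A ∈ 𝒜 → B ∈ 𝒜 → C ∈ 𝒜 →
      IsLocalExtension 𝒜L H π' σ {A, B, C} q := fun hA hB hC =>
    hq _ (by simp [Set.insert_subset_iff, hA, hB, hC])
  refine ⟨q, ⟨fun E hE K hK hne => (hq₃ hE hK hK).1 E (by simp) K (by simp) hne,
    fun K hK hne => ⟨fun A _ => hq01 A K, (hq₃ h𝒜.1 hK hK).2.1 K (by simp) hne,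
      fun A hA B hB hAB => (hq₃ hA hB hK).2.2.1 A (by simp) B (by simp) K (by simp) hne hAB⟩,
    fun E hE F hF K hK hne hEK =>
      (hq₃ hE hF hK).2.2.2.1 E (by simp) F (by simp) K (by simp) hne hEK⟩,
    fun B hB K hK hne =>
      (hq₃ (hL hB) (hL hK) (hL hK)).2.2.2.2.1 B (by simp) K (by simp) hB hK hne,
    fun F hF i => (hq₃ hF (hL (h𝒜L.2.1 i)) hF).2.2.2.2.2 F (by simp) i (by simp)⟩

theorem statement19_general {Ω ι κ : Type*} [Nonempty Ω] (H : ι → Set Ω) (E : κ → Set Ω)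
    (𝒜L 𝒜E 𝒜 : Set (Set Ω))
    (hH : IsPartition H)
    (h𝒜L : IsFieldOver H 𝒜L)
    (h𝒜 : IsJointField H E 𝒜L 𝒜E 𝒜)
    (π : Set Ω → ℝ)
    (σ : Set Ω → ι → ℝ) (hσ : IsStrategy 𝒜 H σ) :
    restrictPairs 𝒜L 𝒜L '' FCPSet 𝒜 𝒜L H π σ =
      restrictPairs 𝒜L 𝒜L ''
        {π' : Set Ω → Set Ω → ℝ | IsFCP 𝒜L π' ∧ ∀ B ∈ 𝒜L, π' B Set.univ = π B} := by
  obtain ⟨h𝒜f, hL, -, -⟩ := h𝒜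
  refine Set.Subset.antisymm ?_ ?_
  · rintro _ ⟨P, ⟨hP, hPπ, -⟩, rfl⟩
    exact ⟨P, ⟨hP.mono hL, hPπ⟩, rfl⟩
  · rintro _ ⟨π', ⟨hπ', hπ'π⟩, rfl⟩
    obtain ⟨Q, hQ, hQπ', hQσ⟩ := exists_isFCP_extension hH h𝒜L h𝒜f hL hσ hπ'
    refine ⟨Q, ⟨hQ, fun B hB => ?_, hQσ⟩, funext fun p => hQπ' _ p.2.1 _ p.2.2.1 p.2.2.2⟩
    rw [hQπ' B hB _ h𝒜L.1.1 Set.univ_nonempty, hπ'π B hB]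

/-- the restrictions to `𝒜L × 𝒜L⁰` of the full conditional probabilities
on `𝒜` extending `{π, σ}` are exactly the (restrictions of) full conditional
probabilities on `𝒜L` extending `π`; in particular they do not depend on `σ`. -/
theorem statement19 {Ω ι κ : Type*} [Nonempty Ω] (H : ι → Set Ω) (E : κ → Set Ω)
    (𝒜L 𝒜E 𝒜 : Set (Set Ω))
    (hH : IsPartition H) (hE : IsPartition E)
    (h𝒜L : IsFieldOver H 𝒜L) (h𝒜E : IsFieldOver E 𝒜E)
    (h𝒜 : IsJointField H E 𝒜L 𝒜E 𝒜)
    (π : Set Ω → ℝ) (hπ : IsFAP 𝒜L π)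
    (σ : Set Ω → ι → ℝ) (hσ : IsStrategy 𝒜 H σ) :
    restrictPairs 𝒜L 𝒜L '' FCPSet 𝒜 𝒜L H π σ =
      restrictPairs 𝒜L 𝒜L ''
        {π' : Set Ω → Set Ω → ℝ | IsFCP 𝒜L π' ∧ ∀ B ∈ 𝒜L, π' B Set.univ = π B} :=
  statement19_general H E 𝒜L 𝒜E 𝒜 hH h𝒜L h𝒜 π σ hσ
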